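/- Fix η ∈ (0,1), γ > 0, r > 0, and define the quadrature error probabilities P_q(θ) = 2Q(u_q(θ)) and P_p(θ) = 2Q(u_p(θ)). Then the function P̃(θ) = P_q(θ) + P_p(θ) is differentiable on ℝ and its derivative satisfies the identity P̃′(θ) = γ · sin θ · cos θ · (a/r) · B(θ) for every θ, where B is the balance function and a = √(2π). In particular, the interior stationary points of P̃ on (0, π/2) are exactly the zeros of B on (0, π/2). -/

import Mathlib

/-! Since `Q' = -φ`, the chain rule through `u = c / √(s₀ + γ sin²θ)` gives
`(2 Q(u))' = 2 φ(u) c γ sin θ cos θ / σ³`. The `p` quadrature depends on `cos²θ` instead, whose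
derivative has the opposite sign, so the two contributions combine into `γ sin θ cos θ (a/r) B(θ)`.
On `(0, π/2)` the prefactor is positive, so `P̃'` vanishes exactly where `B` does. -/

/-- The standard normal density `φ(x) = e^{-x²/2}/√(2π)`. -/
noncomputable def gaussPdf (x : ℝ) : ℝ := Real.exp (-x ^ 2 / 2) / Real.sqrt (2 * Real.pi)

/-- The Gaussian tail `Q(x) = ∫_x^∞ φ(t) dt`. -/
noncomputable def gaussTail (x : ℝ) : ℝ := ∫ t in Set.Ioi x, gaussPdf t

/-- Isotropic loss-induced spread `s₀ = (1-η)/(2η)`. -/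
noncomputable def s0 (η : ℝ) : ℝ := (1 - η) / (2 * η)

/-- The GKP lattice constant `a = √(2π)`. -/
noncomputable def aGKP : ℝ := Real.sqrt (2 * Real.pi)

/-- Effective spread `σ_q(θ) = √(s₀ + γ sin²θ)`. -/
noncomputable def sigq (η γ θ : ℝ) : ℝ := Real.sqrt (s0 η + γ * Real.sin θ ^ 2)

/-- Effective spread `σ_p(θ) = √(s₀ + γ cos²θ)`. -/
noncomputable def sigp (η γ θ : ℝ) : ℝ := Real.sqrt (s0 η + γ * Real.cos θ ^ 2)

/-- Normalized correction radius `u_q(θ) = (a r / 2) / σ_q(θ)`. -/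
noncomputable def uq (η γ r θ : ℝ) : ℝ := aGKP * r / 2 / sigq η γ θ

/-- Normalized correction radius `u_p(θ) = (a / (2r)) / σ_p(θ)`. -/
noncomputable def up (η γ r θ : ℝ) : ℝ := aGKP / (2 * r) / sigp η γ θ

/-- The balance function `B(θ) = r²·φ(u_q)/σ_q³ − φ(u_p)/σ_p³`. -/
noncomputable def balance (η γ r θ : ℝ) : ℝ :=
  r ^ 2 * gaussPdf (uq η γ r θ) / sigq η γ θ ^ 3 - gaussPdf (up η γ r θ) / sigp η γ θ ^ 3

/-- Quadrature error probability `P_q(θ) = 2 Q(u_q(θ))`. -/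
noncomputable def Pq (η γ r θ : ℝ) : ℝ := 2 * gaussTail (uq η γ r θ)

/-- Quadrature error probability `P_p(θ) = 2 Q(u_p(θ))`. -/
noncomputable def Pp (η γ r θ : ℝ) : ℝ := 2 * gaussTail (up η γ r θ)

/-- Logical error rate `P_err(θ) = 1 − (1 − P_q(θ))(1 − P_p(θ))`. -/
noncomputable def Perr (η γ r θ : ℝ) : ℝ := 1 - (1 - Pq η γ r θ) * (1 - Pp η γ r θ)


open Real Set MeasureTheory

theorem hasDerivAt_integral_Ioi {f : ℝ → ℝ} {x : ℝ} (hf : Integrable f)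
    (hx : ContinuousAt f x) :
    HasDerivAt (fun u => ∫ t in Ioi u, f t) (-f x) x := by
  have hsplit : (fun u => (∫ t in u..x, f t) + ∫ t in Ioi x, f t) = fun u => ∫ t in Ioi u, f t :=
    funext fun u => intervalIntegral.integral_interval_add_Ioi' hf.intervalIntegrable hf.integrableOn
  rw [← hsplit]
  exact (intervalIntegral.integral_hasDerivAt_left hf.intervalIntegrable
    hf.aestronglyMeasurable.stronglyMeasurableAtFilter hx).add_const _

theorem integrable_gaussPdf : Integrable gaussPdf := by
  have h : gaussPdf = fun x => (√(2 * π))⁻¹ * exp (-(1 / 2) * x ^ 2) := by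
    funext x
    rw [gaussPdf, div_eq_inv_mul]
    ring_nf
  rw [h]
  exact (integrable_exp_neg_mul_sq (by norm_num)).const_mul _

theorem continuous_gaussPdf : Continuous gaussPdf := by
  unfold gaussPdf
  fun_prop

theorem hasDerivAt_gaussTail (x : ℝ) : HasDerivAt gaussTail (-gaussPdf x) x :=
  hasDerivAt_integral_Ioi integrable_gaussPdf continuous_gaussPdf.continuousAt

theorem HasDerivAt.const_div_sqrt {f : ℝ → ℝ} {f' x : ℝ} (c : ℝ) (hf : HasDerivAt f f' x)
    (hx : 0 < f x) :
    HasDerivAt (fun t => c / √(f t)) (-(c * f') / (2 * √(f x) ^ 3)) x := by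
  have hsqrt : 0 < √(f x) := sqrt_pos.mpr hx
  refine ((hasDerivAt_const x c).div (hf.sqrt hx.ne') hsqrt.ne').congr_deriv ?_
  field_simp
  ring

theorem HasDerivAt.gaussTail_const_div_sqrt {f : ℝ → ℝ} {f' x : ℝ} (c : ℝ)
    (hf : HasDerivAt f f' x) (hx : 0 < f x) :
    HasDerivAt (fun t => gaussTail (c / √(f t)))
      (gaussPdf (c / √(f x)) * (c * f') / (2 * √(f x) ^ 3)) x :=
  ((hasDerivAt_gaussTail _).comp x (hf.const_div_sqrt c hx)).congr_deriv (by ring)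

theorem hasDerivAt_const_add_mul_sin_sq (s γ θ : ℝ) :
    HasDerivAt (fun t => s + γ * sin t ^ 2) (2 * γ * sin θ * cos θ) θ :=
  (((hasDerivAt_sin θ).pow 2).const_mul γ).const_add s |>.congr_deriv (by ring)

theorem hasDerivAt_const_add_mul_cos_sq (s γ θ : ℝ) :
    HasDerivAt (fun t => s + γ * cos t ^ 2) (-(2 * γ * sin θ * cos θ)) θ :=
  (((hasDerivAt_cos θ).pow 2).const_mul γ).const_add s |>.congr_deriv (by ring)

theorem s0_pos {η : ℝ} (hη : η ∈ Ioo (0 : ℝ) 1) : 0 < s0 η :=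
  div_pos (by linarith [hη.2]) (by linarith [hη.1])

theorem hasDerivAt_Pq {η γ : ℝ} (hs : 0 < s0 η) (hγ : 0 ≤ γ) (r θ : ℝ) :
    HasDerivAt (Pq η γ r)
      (γ * sin θ * cos θ * aGKP * r * gaussPdf (uq η γ r θ) / sigq η γ θ ^ 3) θ := by
  have h := ((hasDerivAt_const_add_mul_sin_sq (s0 η) γ θ).gaussTail_const_div_sqrt
    (aGKP * r / 2) (by positivity)).const_mul 2
  exact h.congr_deriv (by unfold uq sigq; ring)

theorem hasDerivAt_Pp {η γ : ℝ} (hs : 0 < s0 η) (hγ : 0 ≤ γ) (r θ : ℝ) :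
    HasDerivAt (Pp η γ r)
      (-(γ * sin θ * cos θ * (aGKP / r) * gaussPdf (up η γ r θ) / sigp η γ θ ^ 3)) θ := by
  have h := ((hasDerivAt_const_add_mul_cos_sq (s0 η) γ θ).gaussTail_const_div_sqrt
    (aGKP / (2 * r)) (by positivity)).const_mul 2
  exact h.congr_deriv (by unfold up sigp; ring)

/-- `P̃(θ) = P_q(θ) + P_p(θ)` is differentiable on ℝ with
`P̃′(θ) = γ sin θ cos θ (a/r) B(θ)`; consequently the interior stationary points of `P̃`
on `(0, π/2)` are exactly the zeros of `B` there. -/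
theorem total_error_derivative (η γ r : ℝ) (hη : η ∈ Set.Ioo (0 : ℝ) 1)
    (hγ : 0 < γ) (hr : 0 < r) :
    (∀ θ : ℝ, HasDerivAt (fun t => Pq η γ r t + Pp η γ r t)
      (γ * Real.sin θ * Real.cos θ * (aGKP / r) * balance η γ r θ) θ) ∧
    (∀ θ ∈ Set.Ioo (0 : ℝ) (Real.pi / 2),
      deriv (fun t => Pq η γ r t + Pp η γ r t) θ = 0 ↔ balance η γ r θ = 0) := by
  have hderiv : ∀ θ : ℝ, HasDerivAt (fun t => Pq η γ r t + Pp η γ r t)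
      (γ * sin θ * cos θ * (aGKP / r) * balance η γ r θ) θ := fun θ =>
    ((hasDerivAt_Pq (s0_pos hη) hγ.le r θ).add (hasDerivAt_Pp (s0_pos hη) hγ.le r θ)).congr_deriv
      (by unfold balance; field_simp; ring)
  refine ⟨hderiv, fun θ hθ => ?_⟩
  have hsin : 0 < sin θ := sin_pos_of_pos_of_lt_pi hθ.1 (by linarith [hθ.2, pi_pos])
  have hcos : 0 < cos θ := cos_pos_of_mem_Ioo ⟨by linarith [hθ.1, pi_pos], hθ.2⟩
  have ha : 0 < aGKP := sqrt_pos.mpr (by positivity)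
  rw [(hderiv θ).deriv, mul_eq_zero, or_iff_right (by positivity)]
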